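/- Let F be an algebraic number field with ring of integers O_F, let p be a rational prime, and let P(X) = X^{p^n} + aX^{p^s} − b ∈ O_F[X] be a monic irreducible (not necessarily monogenic) trinomial with n > s ≥ 0 and middle coefficient a = v·b divisible by the absolute coefficient b. Let θ be a root of P and E = F(θ), of degree [E:F] = p^n. Then N_{E/F}(θ) = (−1)^{p^n−1}·b, the element U := (−1)^{p^n−1}(1 − v·θ^{p^s}) is a unit of O_E, and θ generates an ambiguous principal ideal of E/F, i.e., (θ·O_E)^{p^n} = (b·O_F)·O_E. -/

import Mathlib

open NumberField Polynomial IntermediateField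

/-!
From `P(θ) = 0` and `a = v·b` one gets `θ^(p^n) = b·u` in `𝓞 E` with `u = 1 − v·θ^(p^s)`.
As `θ` generates `E/F`, its norm is `±` the constant coefficient `−b` of its minimal polynomial
`P`. Taking norms, `b^(p^n)·N(u) = N(θ)^(p^n) = ±b^(p^n)`, so `N(u)`, hence `u`, is a unit, and
the ideals satisfy `(θ)^(p^n) = (b·u) = (b)`.
-/

namespace Polynomial

variable {R : Type*}

theorem monic_X_pow_add_C_mul_X_pow_sub_C [Ring R] [Nontrivial R] {m k : ℕ} (a b : R)
    (h : k < m) : (X ^ m + C a * X ^ k - C b).Monic := by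
  monicity!
  simp [h.le, h.not_ge, (k.zero_le.trans_lt h).ne']

theorem coeff_zero_X_pow_add_C_mul_X_pow_sub_C [Ring R] {m k : ℕ} (a b : R) (hk : 0 < k)
    (hm : 0 < m) : (X ^ m + C a * X ^ k - C b).coeff 0 = -b := by
  simp [coeff_X_pow, hk.ne, hm.ne]

theorem natDegree_X_pow_add_C_mul_X_pow_sub_C [Ring R] [Nontrivial R] {m k : ℕ} (a b : R)
    (h : k < m) : (X ^ m + C a * X ^ k - C b).natDegree = m := by
  compute_degree!
  all_goals simp [h.le, h.ne', (k.zero_le.trans_lt h).ne']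

theorem coeff_zero_ne_zero_of_irreducible [CommRing R] [IsDomain R] {f : R[X]}
    (hf : Irreducible f) (hdeg : f.natDegree ≠ 1) : f.coeff 0 ≠ 0 := by
  intro h
  obtain ⟨g, rfl⟩ := X_dvd_iff.mpr h
  have hg : IsUnit g := (hf.isUnit_or_isUnit rfl).resolve_left not_isUnit_X
  exact hdeg (by rw [natDegree_mul X_ne_zero hg.ne_zero, natDegree_eq_zero_of_isUnit hg,
    natDegree_X])

theorem ne_zero_of_irreducible_X_pow_add_C_mul_X_pow_sub_C [CommRing R] [IsDomain R]
    {m k : ℕ} {a b : R} (hf : Irreducible (X ^ m + C a * X ^ k - C b)) (hk : 0 < k)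
    (hkm : k < m) : b ≠ 0 := by
  have := coeff_zero_ne_zero_of_irreducible hf
    (by rw [natDegree_X_pow_add_C_mul_X_pow_sub_C a b hkm]; omega)
  rwa [coeff_zero_X_pow_add_C_mul_X_pow_sub_C a b hk (hk.trans hkm), neg_ne_zero] at this

theorem pow_eq_algebraMap_mul_of_aeval_eq_zero [CommRing R] {A : Type*} [CommRing A]
    [Algebra R A] {m k : ℕ} {v b : R} {x : A}
    (h : aeval x (X ^ m + C (v * b) * X ^ k - C b) = 0) :
    x ^ m = algebraMap R A b * (1 - algebraMap R A v * x ^ k) := by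
  simp only [map_sub, map_add, map_mul, map_pow, aeval_X, aeval_C] at h
  linear_combination h

end Polynomial

theorem Algebra.norm_eq_neg_one_pow_finrank_mul_coeff_zero_minpoly {K L : Type*} [Field K]
    [Field L] [Algebra K L] {x : L} (hx : IsIntegral K x) (hgen : K⟮x⟯ = ⊤) :
    Algebra.norm K x = (-1) ^ Module.finrank K L * (minpoly K x).coeff 0 := by
  let pb := PowerBasis.ofAdjoinEqTop hx
    ((adjoin_simple_eq_top_iff_of_isAlgebraic hx.isAlgebraic).mp hgen)
  rw [pb.finrank]
  exact Algebra.PowerBasis.norm_gen_eq_coeff_zero_minpoly pb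

namespace RingOfIntegers

variable {K L : Type*} [Field K] [Field L] [Algebra K L]

theorem isUnit_of_pow_finrank_eq_algebraMap_mul [NumberField K] [NumberField L]
    {θ u : 𝓞 L} {b : 𝓞 K} (hb : b ≠ 0) (hnorm : Associated (norm K θ) b)
    (h : θ ^ Module.finrank K L = algebraMap (𝓞 K) (𝓞 L) b * u) : IsUnit u := by
  have hN : b ^ Module.finrank K L * norm K u = norm K θ ^ Module.finrank K L := by
    rw [← norm_algebraMap (L := L) K b, ← map_mul, ← h, map_pow]
  have hNu : Associated (b ^ Module.finrank K L * norm K u) (b ^ Module.finrank K L * 1) := by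
    rw [hN, mul_one]
    exact hnorm.pow_pow
  exact (isUnit_norm K).mp
    ((hNu.of_mul_left (.refl _) (pow_ne_zero _ hb)).isUnit_iff.mpr isUnit_one)

theorem aeval_eq_zero_of_aeval_map_eq_zero {f : (𝓞 K)[X]} {x : 𝓞 L}
    (h : aeval (x : L) (f.map (algebraMap (𝓞 K) K)) = 0) : aeval x f = 0 := by
  apply FaithfulSMul.algebraMap_injective (𝓞 L) L
  rwa [← aeval_algebraMap_apply, ← aeval_map_algebraMap K, map_zero]

end RingOfIntegers

/-- For a monic irreducible (not necessarily monogenic) trinomial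
`P(X) = X^(p^n) + a·X^(p^s) − b` over the ring of integers of a number field `F`, with `p`
prime, `n > s ≥ 0` and middle coefficient `a = v·b` divisible by the absolute coefficient
`b`, a root `θ` of `P` generating the extension `E = F(θ)` of degree `p^n` satisfies:
`N_{E/F}(θ) = (−1)^(p^n−1)·b`, the element `(−1)^(p^n−1)·(1 − v·θ^(p^s))` is a unit of
`𝓞 E`, and `θ` generates an ambiguous principal ideal: `(θ·𝓞 E)^(p^n) = (b·𝓞 F)·𝓞 E`. -/
theorem prime_power_trinomial_root_generates_ambiguous_principal_ideal
    (F E : Type*) [Field F] [NumberField F] [Field E] [NumberField E]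
    [Algebra F E]
    (p : ℕ) (hp : p.Prime) (n s : ℕ) (hns : s < n)
    (a b v : 𝓞 F) (hab : a = v * b)
    (P : Polynomial F) (hP : P = X ^ (p ^ n) + C (a : F) * X ^ (p ^ s) - C (b : F))
    (hirr : Irreducible P)
    (θ : 𝓞 E) (hroot : Polynomial.aeval ((θ : E)) P = 0)
    (hgen : IntermediateField.adjoin F {((θ : E))} = ⊤)
    (hdeg : Module.finrank F E = p ^ n) :
    Algebra.norm F ((θ : E)) = (-1 : F) ^ (p ^ n - 1) * (b : F) ∧
    IsUnit ((-1 : 𝓞 E) ^ (p ^ n - 1) * (1 - algebraMap (𝓞 F) (𝓞 E) v * θ ^ (p ^ s))) ∧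
    (Ideal.span {θ} : Ideal (𝓞 E)) ^ (p ^ n) =
      Ideal.map (algebraMap (𝓞 F) (𝓞 E)) (Ideal.span {b}) := by
  have hlt : p ^ s < p ^ n := Nat.pow_lt_pow_right hp.one_lt hns
  have hmin : minpoly F (θ : E) = P := (minpoly.eq_of_irreducible_of_monic hirr hroot
    (hP ▸ monic_X_pow_add_C_mul_X_pow_sub_C _ _ hlt)).symm
  have hc0 : P.coeff 0 = -(b : F) :=
    hP ▸ coeff_zero_X_pow_add_C_mul_X_pow_sub_C _ _ (pow_pos hp.pos s) (pow_pos hp.pos n)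
  have hnorm : Algebra.norm F (θ : E) = (-1) ^ (p ^ n - 1) * (b : F) := by
    rw [Algebra.norm_eq_neg_one_pow_finrank_mul_coeff_zero_minpoly
      (Algebra.IsIntegral.isIntegral _) hgen, hmin, hc0, hdeg,
      ← pow_sub_one_mul (pow_pos hp.pos n).ne']
    ring
  have hb : b ≠ 0 := by
    exact_mod_cast ne_zero_of_irreducible_X_pow_add_C_mul_X_pow_sub_C (hP ▸ hirr)
      (pow_pos hp.pos s) hlt
  have hkey : θ ^ p ^ n = algebraMap (𝓞 F) (𝓞 E) b *
      (1 - algebraMap (𝓞 F) (𝓞 E) v * θ ^ p ^ s) :=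
    pow_eq_algebraMap_mul_of_aeval_eq_zero
      (RingOfIntegers.aeval_eq_zero_of_aeval_map_eq_zero (by simpa [hP, hab] using hroot))
  have hNθ : RingOfIntegers.norm F θ = (-1) ^ (p ^ n - 1) * b :=
    RingOfIntegers.coe_injective (by simpa using hnorm)
  have hu := RingOfIntegers.isUnit_of_pow_finrank_eq_algebraMap_mul hb
    (hNθ ▸ associated_unit_mul_left b _ (isUnit_neg_one.pow _)) (hdeg ▸ hkey)
  refine ⟨hnorm, (isUnit_neg_one.pow _).mul hu, ?_⟩
  rw [Ideal.span_singleton_pow, Ideal.map_span, Set.image_singleton, hkey,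
    Ideal.span_singleton_mul_right_unit hu]
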